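/- Let F̃ : (−1,1) × ℝ → ℝ be the real analytic function satisfying F̃(w,u) = w·( u/(1 − ((1−w)/(1+w))^u) − u/2 ) for w ≠ 0, u ≠ 0. Then for every natural number j: if j is odd, the j-th partial derivative ∂^j F̃/∂w^j (0,u) vanishes for every u ∈ ℝ; and if j is even, there exists a real polynomial P_j of degree at most j containing only even powers of its variable such that ∂^j F̃/∂w^j (0,u) = P_j(u) for every u ∈ ℝ. -/

import Mathlib

/-!
With `L w = log ((1 - w) / (1 + w))`, which is odd in `w`, the function is
`w u (1 / (1 - exp (u L w)) - 1 / 2)`, and `x ↦ 1 / (1 - exp x) - 1 / 2` is odd; so `F̃` is even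
in `w` and in `u`, and its odd `w`-derivatives at `w = 0` vanish.

Writing `L w = w λ(w)` and `exp x - 1 = x φ(x)` with `λ`, `φ` analytic and nowhere zero gives
`F̃(w, u) = G(w, u w)` for `G(w, v) = -1 / (λ(w) φ(v λ(w))) - v / 2`, analytic on the strip.
Hence `∂ʲF̃/∂wʲ(0, u) = DʲG(0)((1, u), …, (1, u))` is a polynomial of degree `≤ j` in `u`,
and evenness in `u` kills its odd coefficients.
-/

open Set Filter Topology Polynomial

theorem Polynomial.coeff_comp_neg_X {R : Type*} [CommRing R] (p : R[X]) (n : ℕ) :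
    (p.comp (-X)).coeff n = (-1) ^ n * p.coeff n := by
  induction p using Polynomial.induction_on' with
  | add p q hp hq => simp only [add_comp, coeff_add, hp, hq, mul_add]
  | monomial k a =>
    rw [monomial_comp, ← neg_one_mul (X : R[X]), mul_pow, ← C_1, ← C_neg, ← C_pow,
      ← mul_assoc, ← C_mul, coeff_C_mul_X_pow, coeff_monomial]
    rcases eq_or_ne n k with rfl | h
    · simp [mul_comm]
    · simp [h, Ne.symm h]

theorem Polynomial.coeff_eq_zero_of_odd_of_eval_neg {R : Type*} [CommRing R] [IsDomain R]
    [CharZero R] {p : R[X]} (hp : ∀ x, p.eval (-x) = p.eval x) {n : ℕ} (hn : Odd n) :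
    p.coeff n = 0 := by
  have hcomp : p.comp (-X) = p := Polynomial.funext fun x => by simp [hp]
  have h := p.coeff_comp_neg_X n
  rw [hcomp, hn.neg_one_pow, neg_one_mul] at h
  exact self_eq_neg.mp h

theorem MultilinearMap.exists_polynomial_apply_add_smul {R M ι : Type*} [CommSemiring R]
    [AddCommMonoid M] [Module R M] [Fintype ι] (T : MultilinearMap R (fun _ : ι => M) R)
    (x y : M) :
    ∃ Q : R[X], Q.natDegree ≤ Fintype.card ι ∧
      ∀ u : R, T (fun _ => x + u • y) = Q.eval u := by
  classical
  refine ⟨∑ s : Finset ι, C (T (s.piecewise (fun _ => y) fun _ => x)) * X ^ s.card,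
    natDegree_sum_le_of_forall_le _ _ fun s _ =>
      (natDegree_C_mul_X_pow_le _ _).trans s.card_le_univ, fun u => ?_⟩
  have hsplit : (fun _ : ι => x + u • y) = (fun _ => u • y) + fun _ => x :=
    funext fun _ => add_comm _ _
  rw [hsplit, T.map_add_univ, eval_finsetSum]
  refine Finset.sum_congr rfl fun s _ => ?_
  have hpiece : (s.piecewise (fun _ => u • y) fun _ => x) =
      s.piecewise (fun i => u • s.piecewise (fun _ => y) (fun _ => x) i)
        (s.piecewise (fun _ => y) fun _ => x) :=
    s.piecewise_congr (fun i hi => by simp [hi]) (fun i hi => by simp [hi])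
  rw [hpiece, T.map_piecewise_smul, Finset.prod_const, smul_eq_mul]
  rw [eval_mul, eval_C, eval_pow, eval_X, mul_comm]

theorem iteratedDeriv_comp_continuousLinearMap {𝕜 E F : Type*} [NontriviallyNormedField 𝕜]
    [NormedAddCommGroup E] [NormedSpace 𝕜 E] [NormedAddCommGroup F] [NormedSpace 𝕜 F]
    {f : E → F} {s : Set E} (hs : IsOpen s) {n : ℕ} (hf : ContDiffOn 𝕜 n f s)
    (g : 𝕜 →L[𝕜] E) {x : 𝕜} (hx : g x ∈ s) :
    iteratedDeriv n (f ∘ g) x = iteratedFDeriv 𝕜 n f (g x) (fun _ => g 1) := by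
  have hpre : IsOpen (g ⁻¹' s) := hs.preimage g.continuous
  rw [iteratedDeriv_eq_iteratedFDeriv, ← iteratedFDerivWithin_of_isOpen n hpre hx,
    g.iteratedFDerivWithin_comp_right hf hs.uniqueDiffOn hpre.uniqueDiffOn hx le_rfl,
    iteratedFDerivWithin_of_isOpen n hs hx]
  rfl

theorem iteratedDeriv_eq_zero_of_odd {F : Type*} [NormedAddCommGroup F] [NormedSpace ℝ F]
    {f : ℝ → F} (hf : (fun x => f (-x)) =ᶠ[𝓝 0] f) {n : ℕ} (hn : Odd n) :
    iteratedDeriv n f 0 = 0 := by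
  have h := iteratedDeriv_comp_neg n f 0
  rw [hf.iteratedDeriv_eq, neg_zero, hn.neg_one_pow, neg_one_smul] at h
  have h2 : (2 : ℝ) • iteratedDeriv n f 0 = 0 := by
    rw [two_smul]; nth_rw 1 [h]; exact neg_add_cancel _
  exact (smul_eq_zero.mp h2).resolve_left two_ne_zero

theorem eqOn_of_eqOn_off_axes {Y : Type*} [TopologicalSpace Y] [T2Space Y]
    {f g : ℝ × ℝ → Y} {s : Set (ℝ × ℝ)} (hs : IsOpen s) (hf : ContinuousOn f s)
    (hg : ContinuousOn g s) (h : ∀ p ∈ s, p.1 ≠ 0 → p.2 ≠ 0 → f p = g p) : EqOn f g s :=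
  have hdense : Dense ({0}ᶜ ×ˢ {0}ᶜ : Set (ℝ × ℝ)) :=
    (dense_compl_singleton 0).prod (dense_compl_singleton 0)
  EqOn.of_subset_closure (fun p hp => h p hp.1 hp.2.1 hp.2.2) hf hg inter_subset_left
    (hdense.open_subset_closure_inter hs)

theorem AnalyticAt.dslope {𝕜 E : Type*} [NontriviallyNormedField 𝕜] [NormedAddCommGroup E]
    [NormedSpace 𝕜 E] {f : 𝕜 → E} {a b : 𝕜} (ha : AnalyticAt 𝕜 f a)
    (hb : AnalyticAt 𝕜 f b) :
    AnalyticAt 𝕜 (dslope f a) b := by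
  rcases eq_or_ne b a with rfl | hba
  · obtain ⟨p, hp⟩ := ha
    exact hp.has_fpower_series_dslope_fslope.analyticAt
  · refine AnalyticAt.congr ?_ (dslope_eventuallyEq_slope_of_ne f hba).symm
    rw [show slope f a = fun x => (x - a)⁻¹ • (f x - f a) from funext (slope_def_module f a)]
    exact ((analyticAt_id.sub analyticAt_const).inv (sub_ne_zero.2 hba)).smul
      (hb.sub analyticAt_const)

namespace FTilde

noncomputable def logRatio (w : ℝ) : ℝ := Real.log ((1 - w) / (1 + w))

noncomputable def formula (w u : ℝ) : ℝ := w * (u / (1 - ((1 - w) / (1 + w)) ^ u) - u / 2)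

/-- The function `G` of the header; `dslope` fills in the removable singularities of `logRatio w / w` and `(exp x - 1) / x`. -/
noncomputable def desing (p : ℝ × ℝ) : ℝ :=
  -(dslope logRatio 0 p.1 * dslope Real.exp 0 (p.2 * dslope logRatio 0 p.1))⁻¹ - p.2 / 2

def strip : Set (ℝ × ℝ) := Prod.fst ⁻¹' Ioo (-1) 1

theorem isOpen_strip : IsOpen strip := isOpen_Ioo.preimage continuous_fst

variable {w : ℝ}

theorem ratio_pos (hw : w ∈ Ioo (-1) 1) : 0 < (1 - w) / (1 + w) :=
  div_pos (by linarith [hw.2]) (by linarith [hw.1])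

theorem rpow_ratio_eq_exp (hw : w ∈ Ioo (-1) 1) (u : ℝ) :
    ((1 - w) / (1 + w)) ^ u = Real.exp (u * logRatio w) := by
  rw [Real.rpow_def_of_pos (ratio_pos hw), mul_comm, logRatio]

theorem logRatio_neg (w : ℝ) : logRatio (-w) = -logRatio w := by
  rw [logRatio, logRatio, ← Real.log_inv, inv_div, sub_neg_eq_add, ← sub_eq_add_neg]

theorem logRatio_ne_zero (hw : w ∈ Ioo (-1) 1) (hw0 : w ≠ 0) : logRatio w ≠ 0 := by
  refine Real.log_ne_zero_of_pos_of_ne_one (ratio_pos hw) fun h => hw0 ?_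
  rw [div_eq_one_iff_eq (by linarith [hw.1])] at h
  linarith

theorem analyticAt_logRatio (hw : w ∈ Ioo (-1) 1) : AnalyticAt ℝ logRatio w := by
  have hden : (1 : ℝ) + w ≠ 0 := by linarith [hw.1]
  have h : AnalyticAt ℝ (fun z : ℝ => (1 - z) / (1 + z)) w :=
    (analyticAt_const.sub analyticAt_id).div (analyticAt_const.add analyticAt_id) hden
  exact h.log (ratio_pos hw)

theorem hasDerivAt_logRatio_zero : HasDerivAt logRatio (-2) 0 := by
  have h := (((hasDerivAt_id' (0 : ℝ)).const_sub 1).div ((hasDerivAt_id' (0 : ℝ)).const_add 1)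
    (by norm_num)).log (by norm_num)
  convert h using 1
  · rfl
  · norm_num

theorem dslope_logRatio_ne_zero (hw : w ∈ Ioo (-1) 1) : dslope logRatio 0 w ≠ 0 := by
  rcases eq_or_ne w 0 with rfl | hw0
  · rw [dslope_same, hasDerivAt_logRatio_zero.deriv]; norm_num
  · rw [dslope_of_ne _ hw0, slope_def_field]
    exact div_ne_zero (by simpa [logRatio] using logRatio_ne_zero hw hw0) (by simpa using hw0)

theorem dslope_exp_ne_zero (x : ℝ) : dslope Real.exp 0 x ≠ 0 := by
  rcases eq_or_ne x 0 with rfl | hx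
  · simp [dslope_same]
  · rw [dslope_of_ne _ hx, slope_def_field]
    exact div_ne_zero (by simpa [sub_eq_zero] using hx) (by simpa using hx)

theorem one_div_one_sub_exp_neg {x : ℝ} (hx : x ≠ 0) :
    1 / (1 - Real.exp (-x)) - 1 / 2 = -(1 / (1 - Real.exp x) - 1 / 2) := by
  have hexp : Real.exp x ≠ 1 := fun h => hx (Real.exp_eq_one_iff x |>.1 h)
  have h1 : 1 - Real.exp x ≠ 0 := sub_ne_zero.2 hexp.symm
  have h2 : Real.exp x - 1 ≠ 0 := sub_ne_zero.2 hexp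
  rw [Real.exp_neg]
  field_simp
  ring

theorem formula_eq_mul_exp (hw : w ∈ Ioo (-1) 1) (u : ℝ) :
    formula w u = w * u * (1 / (1 - Real.exp (u * logRatio w)) - 1 / 2) := by
  rw [formula, rpow_ratio_eq_exp hw]
  ring

theorem neg_mem_Ioo (hw : w ∈ Ioo (-1 : ℝ) 1) : -w ∈ Ioo (-1 : ℝ) 1 :=
  ⟨by linarith [hw.2], by linarith [hw.1]⟩

theorem formula_neg_left (hw : w ∈ Ioo (-1) 1) (hw0 : w ≠ 0) {u : ℝ} (hu0 : u ≠ 0) :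
    formula (-w) u = formula w u := by
  rw [formula_eq_mul_exp (neg_mem_Ioo hw), formula_eq_mul_exp hw, logRatio_neg, mul_neg,
    one_div_one_sub_exp_neg (mul_ne_zero hu0 (logRatio_ne_zero hw hw0))]
  ring

theorem formula_neg_right (hw : w ∈ Ioo (-1) 1) (hw0 : w ≠ 0) {u : ℝ} (hu0 : u ≠ 0) :
    formula w (-u) = formula w u := by
  rw [formula_eq_mul_exp hw, formula_eq_mul_exp hw, neg_mul,
    one_div_one_sub_exp_neg (mul_ne_zero hu0 (logRatio_ne_zero hw hw0))]
  ring

theorem formula_eq_desing (hw : w ∈ Ioo (-1) 1) (hw0 : w ≠ 0) {u : ℝ} (hu0 : u ≠ 0) :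
    formula w u = desing (w, u * w) := by
  have hL := logRatio_ne_zero hw hw0
  have hx : u * logRatio w ≠ 0 := mul_ne_zero hu0 hL
  have hexp : Real.exp (u * logRatio w) ≠ 1 := fun h => hx (Real.exp_eq_one_iff _ |>.1 h)
  have h1 : 1 - Real.exp (u * logRatio w) ≠ 0 := sub_ne_zero.2 hexp.symm
  have h2 : Real.exp (u * logRatio w) - 1 ≠ 0 := sub_ne_zero.2 hexp
  have hslope : dslope logRatio 0 w = logRatio w / w := by
    rw [dslope_of_ne _ hw0, slope_def_field, logRatio, logRatio]; simp
  have harg : u * w * (logRatio w / w) = u * logRatio w := by field_simp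
  rw [formula_eq_mul_exp hw, desing, hslope, harg, dslope_of_ne _ hx, slope_def_field]
  simp only [Real.exp_zero, sub_zero]
  field_simp
  ring

theorem analyticOnNhd_desing : AnalyticOnNhd ℝ desing strip := by
  intro p hp
  have h0 : (0 : ℝ) ∈ Ioo (-1) 1 := by norm_num
  have hL : AnalyticAt ℝ (fun q : ℝ × ℝ => dslope logRatio 0 q.1) p :=
    ((analyticAt_logRatio h0).dslope (analyticAt_logRatio hp)).comp analyticAt_fst
  have hE : AnalyticAt ℝ
      (fun q : ℝ × ℝ => dslope Real.exp 0 (q.2 * dslope logRatio 0 q.1)) p :=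
    (analyticAt_rexp.dslope analyticAt_rexp).comp (analyticAt_snd.mul hL)
  exact ((hL.mul hE).inv (mul_ne_zero (dslope_logRatio_ne_zero hp) (dslope_exp_ne_zero _))).neg.sub
    (analyticAt_snd.div analyticAt_const two_ne_zero)

theorem analyticOnNhd_desing_comp :
    AnalyticOnNhd ℝ (fun p : ℝ × ℝ => desing (p.1, p.2 * p.1)) strip :=
  fun p hp => (analyticOnNhd_desing (p.1, p.2 * p.1) hp).comp
    (f := fun q : ℝ × ℝ => (q.1, q.2 * q.1))
    (analyticAt_fst.prod (analyticAt_snd.mul analyticAt_fst))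

variable {F : ℝ × ℝ → ℝ}

theorem eventually_mem_strip (u : ℝ) : ∀ᶠ w in 𝓝 (0 : ℝ), (w, u) ∈ strip :=
  Ioo_mem_nhds (by norm_num) (by norm_num)

theorem eventuallyEq_slice_of_eqOn {G : ℝ × ℝ → ℝ} (h : EqOn F G strip) (u : ℝ) :
    (fun w => F (w, u)) =ᶠ[𝓝 0] fun w => G (w, u) :=
  (eventually_mem_strip u).mono fun _ hw => h hw

theorem eqOn_desing_comp (hF : ContinuousOn F strip)
    (heq : ∀ p ∈ strip, p.1 ≠ 0 → p.2 ≠ 0 → F p = formula p.1 p.2) :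
    EqOn F (fun p => desing (p.1, p.2 * p.1)) strip :=
  eqOn_of_eqOn_off_axes isOpen_strip hF analyticOnNhd_desing_comp.continuousOn
    fun p hp h1 h2 => (heq p hp h1 h2).trans (formula_eq_desing hp h1 h2)

theorem eventuallyEq_neg_fst (hF : ContinuousOn F strip)
    (heq : ∀ p ∈ strip, p.1 ≠ 0 → p.2 ≠ 0 → F p = formula p.1 p.2) (u : ℝ) :
    (fun w => F (-w, u)) =ᶠ[𝓝 0] fun w => F (w, u) := by
  refine eventuallyEq_slice_of_eqOn (F := fun p => F (-p.1, p.2)) ?_ u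
  refine eqOn_of_eqOn_off_axes isOpen_strip
    (hF.comp (by fun_prop) fun p hp => neg_mem_Ioo hp) hF fun p hp h1 h2 => ?_
  rw [heq (-p.1, p.2) (neg_mem_Ioo hp) (neg_ne_zero.2 h1) h2, heq p hp h1 h2,
    formula_neg_left hp h1 h2]

theorem eventuallyEq_neg_snd (hF : ContinuousOn F strip)
    (heq : ∀ p ∈ strip, p.1 ≠ 0 → p.2 ≠ 0 → F p = formula p.1 p.2) (u : ℝ) :
    (fun w => F (w, -u)) =ᶠ[𝓝 0] fun w => F (w, u) := by
  refine eventuallyEq_slice_of_eqOn (F := fun p => F (p.1, -p.2)) ?_ u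
  refine eqOn_of_eqOn_off_axes isOpen_strip
    (hF.comp (by fun_prop) fun p hp => hp) hF fun p hp h1 h2 => ?_
  rw [heq (p.1, -p.2) hp h1 (neg_ne_zero.2 h2), heq p hp h1 h2, formula_neg_right hp h1 h2]

theorem iteratedDeriv_slice_eq (hF : ContinuousOn F strip)
    (heq : ∀ p ∈ strip, p.1 ≠ 0 → p.2 ≠ 0 → F p = formula p.1 p.2) (j : ℕ) (u : ℝ) :
    iteratedDeriv j (fun w => F (w, u)) 0 =
      iteratedFDeriv ℝ j desing 0 (fun _ => (1, 0) + u • (0, 1)) := by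
  let g : ℝ →L[ℝ] ℝ × ℝ :=
    (ContinuousLinearMap.id ℝ ℝ).prod (u • ContinuousLinearMap.id ℝ ℝ)
  have hg : desing ∘ g = fun w => desing (w, u * w) := rfl
  rw [(eventuallyEq_slice_of_eqOn (eqOn_desing_comp hF heq) u).iteratedDeriv_eq, ← hg,
    iteratedDeriv_comp_continuousLinearMap isOpen_strip
      (analyticOnNhd_desing.contDiffOn isOpen_strip.uniqueDiffOn) g
      (by simpa [g] using (eventually_mem_strip 0).self_of_nhds)]
  simp [g, Prod.zero_eq_mk]

end FTilde

open FTilde in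
/-- (Lemma 5.4, part 3.)  Let `F̃ : ℝ × ℝ → ℝ` be real analytic on the strip
`(−1,1) × ℝ` and satisfy `F̃(w,u) = w·(u/(1 − ((1−w)/(1+w))^u) − u/2)` for `w ≠ 0`, `u ≠ 0`.
Then for every `j : ℕ`: if `j` is odd, `∂ʲF̃/∂wʲ(0,u) = 0` for all `u`; if `j` is even, there
is a real polynomial `P` of degree at most `j` with only even-degree terms such that
`∂ʲF̃/∂wʲ(0,u) = P(u)` for all `u`. -/
theorem statement_6 (F : ℝ × ℝ → ℝ)
    (hF : AnalyticOnNhd ℝ F {p : ℝ × ℝ | -1 < p.1 ∧ p.1 < 1})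
    (heq : ∀ w u : ℝ, -1 < w → w < 1 → w ≠ 0 → u ≠ 0 →
      F (w, u) = w * (u / (1 - ((1 - w) / (1 + w)) ^ u) - u / 2)) :
    ∀ j : ℕ,
      (Odd j → ∀ u : ℝ, iteratedDeriv j (fun w => F (w, u)) 0 = 0) ∧
      (Even j → ∃ P : Polynomial ℝ, P.natDegree ≤ j ∧ (∀ k : ℕ, Odd k → P.coeff k = 0) ∧
        ∀ u : ℝ, iteratedDeriv j (fun w => F (w, u)) 0 = P.eval u) := by
  have hF' : ContinuousOn F strip := hF.continuousOn
  have heq' : ∀ p ∈ strip, p.1 ≠ 0 → p.2 ≠ 0 → F p = formula p.1 p.2 :=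
    fun p hp => heq p.1 p.2 hp.1 hp.2
  intro j
  refine ⟨fun hj u => iteratedDeriv_eq_zero_of_odd (eventuallyEq_neg_fst hF' heq' u) hj,
    fun _ => ?_⟩
  obtain ⟨Q, hQdeg, hQ⟩ :=
    (iteratedFDeriv ℝ j desing 0).toMultilinearMap.exists_polynomial_apply_add_smul (1, 0) (0, 1)
  have hslice (u : ℝ) : iteratedDeriv j (fun w => F (w, u)) 0 = Q.eval u :=
    (iteratedDeriv_slice_eq hF' heq' j u).trans (hQ u)
  refine ⟨Q, by simpa using hQdeg,
    fun k hk => Q.coeff_eq_zero_of_odd_of_eval_neg (fun u => ?_) hk, hslice⟩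
  rw [← hslice, ← hslice, (eventuallyEq_neg_snd hF' heq' u).iteratedDeriv_eq]
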